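/- arXiv:0708.0580 — 3 statements merged into one kernel-verified Lean document; each statement's English description precedes it below -/
import Mathlib

section
/- Commutativity Lemma: Let A = (Σ, Q, q0, {f_σ}, O, β) be an FSA that is symmetric, accessible, and distinguishable. Then the transition functions pairwise commute: for all σ1, σ2 ∈ Σ, f_{σ1} ∘ f_{σ2} = f_{σ2} ∘ f_{σ1}. -/
/-- `fStar f w q` is `f_w(q)`: apply the transition functions of the characters
of `w` in order, starting from state `q` (with `f_ε = id`). -/
def fStar {S Q : Type} (f : S → Q → Q) (w : List S) (q : Q) : Q :=
  w.foldl (fun q a => f a q) q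

/-- `Chi α c w q` says that `q ∈ χ_{A'}(w)` for the divide-and-conquer tuple with
input function `α` and combining function `c`: for a single character `σ`,
`χ(σ) = {α σ}`; for longer words, `χ(w)` is the union over all partitions
`w = u ++ v` into two nonempty substrings of `{c (a, b) : a ∈ χ(u), b ∈ χ(v)}`. -/
inductive Chi {S Q' : Type} (α : S → Q') (c : Q' × Q' → Q') : List S → Q' → Prop
  | single (a : S) : Chi α c [a] (α a)
  | combine {u v : List S} {x y : Q'} :
      u ≠ [] → v ≠ [] → Chi α c u x → Chi α c v y → Chi α c (u ++ v) (c (x, y))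

/-- Commutativity Lemma: if an FSA is symmetric (its output is invariant under
permutations of the input word), accessible, and distinguishable, then its
transition functions pairwise commute. -/
theorem stmt1 {S Q O : Type} [Fintype S] [Fintype Q] [Fintype O]
    (f : S → Q → Q) (q0 : Q) (β : Q → O)
    (hsym : ∀ w w' : List S, w ≠ [] → w.Perm w' →
      β (fStar f w q0) = β (fStar f w' q0))
    (hacc : ∀ q : Q, ∃ w : List S, fStar f w q0 = q)
    (hdist : ∀ q q' : Q, q ≠ q' → ∃ w : List S, β (fStar f w q) ≠ β (fStar f w q')) :
    ∀ σ1 σ2 : S, f σ1 ∘ f σ2 = f σ2 ∘ f σ1 := by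
  have happ : ∀ (u v : List S) (q : Q), fStar f (u ++ v) q = fStar f v (fStar f u q) := by
    intro u v q; simp [fStar, List.foldl_append]
  intro σ1 σ2
  funext q
  by_contra hne
  obtain ⟨w, hw⟩ := hacc q
  obtain ⟨v, hv⟩ := hdist _ _ hne
  apply hv
  have h1 : fStar f (w ++ [σ2, σ1] ++ v) q0 = fStar f v ((f σ1 ∘ f σ2) q) := by
    rw [happ, happ, hw]; rfl
  have h2 : fStar f (w ++ [σ1, σ2] ++ v) q0 = fStar f v ((f σ2 ∘ f σ1) q) := by
    rw [happ, happ, hw]; rfl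
  have := hsym (w ++ [σ2, σ1] ++ v) (w ++ [σ1, σ2] ++ v) (by simp)
    (by
      apply List.Perm.append_right
      apply List.Perm.append_left
      exact List.Perm.swap σ1 σ2 [])
  rw [h1, h2] at this
  exact this
end

section
/- Let A = (Σ, Q, q0, {f_σ}, O, β) be an FSA whose transition functions pairwise commute (f_{σ1} ∘ f_{σ2} = f_{σ2} ∘ f_{σ1} for all σ1, σ2 ∈ Σ), and suppose r : Q → Σ* is a choice of representative strings satisfying f_{r(q)}(q0) = q for every q ∈ Q. Then for every string w ∈ Σ*, f_w = f_{r(f_w(q0))} as functions from Q to Q. -/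
lemma fStar_char_comm {S Q : Type} (f : S → Q → Q)
    (hcomm : ∀ σ1 σ2 : S, f σ1 ∘ f σ2 = f σ2 ∘ f σ1)
    (a : S) : ∀ (v : List S) (q : Q), f a (fStar f v q) = fStar f v (f a q) := by
  intro v
  induction v with
  | nil => intro q; rfl
  | cons b v ih =>
    intro q
    simp only [fStar, List.foldl_cons] at *
    rw [ih, show f a (f b q) = f b (f a q) from congrFun (hcomm a b) q]

lemma fStar_comm {S Q : Type} (f : S → Q → Q)
    (hcomm : ∀ σ1 σ2 : S, f σ1 ∘ f σ2 = f σ2 ∘ f σ1)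
    (u v : List S) (q : Q) : fStar f u (fStar f v q) = fStar f v (fStar f u q) := by
  induction u generalizing q with
  | nil => rfl
  | cons a u ih =>
    have h1 : ∀ x : Q, fStar f (a :: u) x = fStar f u (f a x) := fun _ => rfl
    rw [h1, h1, fStar_char_comm f hcomm a v q, ih (f a q)]

lemma fStar_append {S Q : Type} (f : S → Q → Q) (u v : List S) (q : Q) :
    fStar f (u ++ v) q = fStar f v (fStar f u q) := by
  simp [fStar]

/-- If the transition functions of an FSA pairwise commute and `r q` is a
representative string with `f_{r q}(q0) = q` for each state `q`, then every
string `w` acts like its representative: `f_w = f_{r (f_w q0)}`. -/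
theorem stmt2 {S Q : Type} [Fintype S] [Fintype Q]
    (f : S → Q → Q) (q0 : Q) (r : Q → List S)
    (hcomm : ∀ σ1 σ2 : S, f σ1 ∘ f σ2 = f σ2 ∘ f σ1)
    (hr : ∀ q : Q, fStar f (r q) q0 = q) :
    ∀ w : List S, fStar f w = fStar f (r (fStar f w q0)) := by
  intro w
  funext q
  calc fStar f w q = fStar f w (fStar f (r q) q0) := by rw [hr q]
    _ = fStar f (r q) (fStar f w q0) := fStar_comm f hcomm w (r q) q0
    _ = fStar f (r q) (fStar f (r (fStar f w q0)) q0) := by rw [hr]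
    _ = fStar f (r (fStar f w q0)) (fStar f (r q) q0) :=
        fStar_comm f hcomm (r q) (r (fStar f w q0)) q0
    _ = fStar f (r (fStar f w q0)) q := by rw [hr q]
end

section
/- Let A = (Σ, Q, q0, {f_σ}, O, β) be an FSA whose transition functions pairwise commute, and let r : Q → Σ* satisfy f_{r(q)}(q0) = q for every q ∈ Q. Define the divide-and-conquer tuple A' = (Σ, Q, α, c, O, β) by α(σ) := f_σ(q0) and c(q, q') := f_{r(q')}(q). Then for every nonempty string w ∈ Σ⁺, the set χ_{A'}(w) is the singleton {f_w(q0)}. -/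
lemma fStar_cons {S Q : Type} (f : S → Q → Q) (a : S) (w : List S) (q : Q) :
    fStar f (a :: w) q = fStar f w (f a q) := rfl

lemma fStar_comm_single {S Q : Type} (f : S → Q → Q)
    (hcomm : ∀ σ1 σ2 : S, f σ1 ∘ f σ2 = f σ2 ∘ f σ1)
    (a : S) (v : List S) (q : Q) :
    f a (fStar f v q) = fStar f v (f a q) := by
  induction v generalizing q with
  | nil => rfl
  | cons b t ih =>
      rw [fStar_cons, fStar_cons, ih]
      have := congrFun (hcomm b a) q
      simp only [Function.comp] at this
      rw [this]

/-- If the transition functions of an FSA pairwise commute and `r` picks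
representative strings (`f_{r q}(q0) = q`), then the divide-and-conquer tuple
with `α σ := f σ q0` and `c (q, q') := f_{r q'}(q)` satisfies: for every
nonempty word `w`, `χ(w)` is the singleton `{f_w(q0)}`. -/
theorem stmt3 {S Q : Type} [Fintype S] [Fintype Q]
    (f : S → Q → Q) (q0 : Q) (r : Q → List S)
    (hcomm : ∀ σ1 σ2 : S, f σ1 ∘ f σ2 = f σ2 ∘ f σ1)
    (hr : ∀ q : Q, fStar f (r q) q0 = q) :
    ∀ w : List S, w ≠ [] →
      {q : Q | Chi (fun σ => f σ q0) (fun p => fStar f (r p.2) p.1) w q}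
        = {fStar f w q0} := by
  intro w hw
  ext q
  simp only [Set.mem_setOf_eq, Set.mem_singleton_iff]
  constructor
  · intro h
    clear hw
    induction h with
    | single a => rfl
    | @combine u v x y hu hv hx hy ihx ihy =>
        subst ihx; subst ihy
        rw [fStar_append]
        rw [fStar_comm f hcomm (r (fStar f v q0)) u, hr]
        exact (fStar_comm f hcomm v u q0).symm
  · rintro rfl
    induction w with
    | nil => exact absurd rfl hw
    | cons a t ih =>
        rcases t.eq_nil_or_concat with rfl | _
        · exact Chi.single a
        · have ht : t ≠ [] := by rintro rfl; simp_all
          have h1 : Chi (fun σ => f σ q0) (fun p => fStar f (r p.2) p.1) [a] (f a q0) :=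
            Chi.single a
          have h2 := ih ht
          have := Chi.combine (by simp) ht h1 h2
          simp only [List.singleton_append] at this
          convert this using 1
          rw [fStar_cons, ← fStar_comm_single f hcomm,
            ← fStar_comm_single f hcomm, hr]
end
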